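/- Let α be a prime number. For every integer n ≥ 0, ∑_{k=2}^{n+2} S^{(2)}_{n+2,k} · μ(α·k) = ∑_{j ≥ 0} ( p(n+1-α^j) - p(n+2-α^{j+1}) ), where p(m) = 0 for m < 0 and the sum is finite since only finitely many terms are nonzero. -/

import Mathlib

open Finset

/-- The number of partitions of `n`. -/
def p (n : ℕ) : ℕ := Fintype.card (Nat.Partition n)

/-- The partition function extended by zero to negative integer arguments. -/
def pz (m : ℤ) : ℤ := if 0 ≤ m then (p m.toNat : ℤ) else 0

/-- `S r n k` : the total number of parts equal to `k` in all partitions of `n`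
whose parts are all at least `r`. -/
def S (r n k : ℕ) : ℕ :=
  ∑ P : Nat.Partition n, if ∀ i ∈ P.parts, r ≤ i then P.parts.count k else 0

/-!
Write `N = n + 2` and `p₂(x) = p(x) - p(x - 1)` for the number of partitions of `x` into parts
`≥ 2`. Removing `m` parts equal to `k` shows `S^{(2)}_{N,k} = ∑_{m ≥ 1} p₂(N - mk)`, so after
exchanging the order of summation the left side is `∑_{1 ≤ s ≤ N} p₂(N - s) ∑_{k ∣ s, k ≥ 2} μ(αk)`.
Since `μ(αk) = -μ(k)` for `α ∤ k` and `0` otherwise, `∑_{k ∣ s} μ(αk)` is `-1` when `s` is a power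
of `α` and `0` otherwise, and the left side becomes `p(N - 1) - ∑_j p₂(N - α^j)`. The right side
telescopes to the same expression.
-/

open ArithmeticFunction
open scoped ArithmeticFunction.Moebius

namespace Nat.Partition

theorem sum_sub_replicate_add {N m k : ℕ} (P : N.Partition) (h : m ≤ P.parts.count k) :
    (P.parts - Multiset.replicate m k).sum + m * k = N := by
  obtain ⟨u, hu⟩ := Multiset.le_iff_exists_add.mp (Multiset.le_count_iff_replicate_le.mp h)
  have hsum := P.parts_sum
  rw [hu, Multiset.sum_add, Multiset.sum_replicate, smul_eq_mul] at hsum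
  rw [hu, add_tsub_cancel_left]
  lia

theorem count_mul_le {N : ℕ} (P : N.Partition) (k : ℕ) : P.parts.count k * k ≤ N := by
  have := P.sum_sub_replicate_add le_rfl (k := k)
  lia

theorem count_eq_card_filter_Icc {N k : ℕ} (P : N.Partition) (hk : 0 < k) :
    P.parts.count k = #{m ∈ Icc 1 (N / k) | m ≤ P.parts.count k} := by
  have hle := (Nat.le_div_iff_mul_le hk).mpr (P.count_mul_le k)
  have : {m ∈ Icc 1 (N / k) | m ≤ P.parts.count k} = Icc 1 (P.parts.count k) := by
    ext m
    simp only [mem_filter, mem_Icc]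
    lia
  rw [this, Nat.card_Icc, Nat.add_sub_cancel]

end Nat.Partition

def pAtLeast (r N : ℕ) : ℕ := #(Nat.Partition.restricted N (r ≤ ·))

theorem card_filter_le_count_eq_pAtLeast {r N k m : ℕ} (hk : 0 < k) (hrk : r ≤ k)
    (hm : m * k ≤ N) :
    #{P ∈ Nat.Partition.restricted N (r ≤ ·) | m ≤ P.parts.count k} = pAtLeast r (N - m * k) := by
  simp only [pAtLeast, Nat.Partition.restricted, filter_filter]
  refine card_bij'
    (fun P hP => ⟨P.parts - Multiset.replicate m k,
      fun hi => P.parts_pos (Multiset.mem_of_le (Multiset.sub_le_self _ _) hi),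
      by have := P.sum_sub_replicate_add (mem_filter.mp hP).2.2; lia⟩)
    (fun Q _ => ⟨Q.parts + Multiset.replicate m k, ?_, ?_⟩) ?_ ?_ ?_ ?_
  · intro i hi
    rcases Multiset.mem_add.mp hi with hi | hi
    · exact Q.parts_pos hi
    · rw [Multiset.eq_of_mem_replicate hi]; exact hk
  · rw [Multiset.sum_add, Multiset.sum_replicate, smul_eq_mul, Q.parts_sum]
    lia
  · intro P hP
    simp only [mem_filter, mem_univ, true_and] at hP ⊢
    exact fun i hi => hP.1 i (Multiset.mem_of_le (Multiset.sub_le_self _ _) hi)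
  · intro Q hQ
    simp only [mem_filter, mem_univ, true_and, Multiset.mem_add, Multiset.count_add,
      Multiset.count_replicate_self] at hQ ⊢
    refine ⟨fun i hi => ?_, by lia⟩
    rcases hi with hi | hi
    · exact hQ i hi
    · rw [Multiset.eq_of_mem_replicate hi]; exact hrk
  · intro P hP
    ext1
    exact tsub_add_cancel_of_le (Multiset.le_count_iff_replicate_le.mp (mem_filter.mp hP).2.2)
  · intro Q _
    ext1
    exact add_tsub_cancel_right _ _

theorem S_eq_sum_pAtLeast {r N k : ℕ} (hk : 0 < k) (hrk : r ≤ k) :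
    S r N k = ∑ m ∈ Icc 1 (N / k), pAtLeast r (N - m * k) := by
  calc S r N k
      = ∑ P ∈ Nat.Partition.restricted N (r ≤ ·), #{m ∈ Icc 1 (N / k) | m ≤ P.parts.count k} := by
        rw [S, Nat.Partition.restricted, sum_filter]
        exact sum_congr rfl fun P _ => by rw [← P.count_eq_card_filter_Icc hk]
    _ = ∑ m ∈ Icc 1 (N / k), #{P ∈ Nat.Partition.restricted N (r ≤ ·) | m ≤ P.parts.count k} := by
        simp only [card_filter]
        exact sum_comm
    _ = ∑ m ∈ Icc 1 (N / k), pAtLeast r (N - m * k) :=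
        sum_congr rfl fun m hm => card_filter_le_count_eq_pAtLeast hk hrk
          ((Nat.le_div_iff_mul_le hk).mp (mem_Icc.mp hm).2)

theorem p_succ_eq_pAtLeast_two_add (N : ℕ) : p (N + 1) = pAtLeast 2 (N + 1) + p N := by
  have hone : #{P : (N + 1).Partition | 1 ∈ P.parts} = p N := by
    rw [← Fintype.card_subtype, p,
      Fintype.card_congr (Nat.Partition.partitionWithPartEquiv le_rfl (by lia)), Nat.add_sub_cancel]
  have hnot : ∀ P : (N + 1).Partition, (¬∀ i ∈ P.parts, 2 ≤ i) ↔ 1 ∈ P.parts := by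
    intro P
    refine ⟨fun h => ?_, fun h h2 => absurd (h2 1 h) (by lia)⟩
    push Not at h
    obtain ⟨i, hi, hi2⟩ := h
    obtain rfl : i = 1 := by have := P.parts_pos hi; lia
    exact hi
  rw [p, ← card_univ, ← card_filter_add_card_filter_not (fun P => ∀ i ∈ P.parts, 2 ≤ i), ← hone]
  simp only [hnot]
  rfl

theorem pz_natCast (x : ℕ) : pz x = p x := by simp [pz]

theorem pz_of_neg {m : ℤ} (h : m < 0) : pz m = 0 := if_neg (by lia)

def pzDiff (m : ℤ) : ℤ := pz m - pz (m - 1)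

theorem pzDiff_of_neg {m : ℤ} (h : m < 0) : pzDiff m = 0 := by
  rw [pzDiff, pz_of_neg h, pz_of_neg (by lia), sub_zero]

theorem pAtLeast_two_eq_pzDiff (x : ℕ) : (pAtLeast 2 x : ℤ) = pzDiff x := by
  cases x with
  | zero => simp [pAtLeast, Nat.Partition.restricted, pzDiff, pz, p]
  | succ M =>
    rw [pzDiff, Nat.cast_succ, add_sub_cancel_right, ← Nat.cast_succ, pz_natCast, pz_natCast,
      p_succ_eq_pAtLeast_two_add]
    push_cast
    ring

theorem sum_Icc_pzDiff_sub (N : ℕ) : ∑ s ∈ Icc 1 N, pzDiff ((N : ℤ) - s) = pz (N - 1) := by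
  rw [← Ico_add_one_right_eq_Icc, sum_Ico_eq_sum_range, Nat.add_sub_cancel]
  have hterm : ∀ i : ℕ, pzDiff ((N : ℤ) - (1 + i : ℕ)) =
      pz ((N : ℤ) - 1 - i) - pz ((N : ℤ) - 1 - (i + 1 : ℕ)) :=
    fun i => by rw [pzDiff]; push_cast; ring_nf
  simp only [hterm]
  rw [sum_range_sub' (fun i : ℕ => pz ((N : ℤ) - 1 - i)), Nat.cast_zero, sub_zero,
    pz_of_neg (m := (N : ℤ) - 1 - N) (by lia), sub_zero]

theorem moebius_prime_mul_of_dvd {α k : ℕ} (hα : α.Prime) (h : α ∣ k) : μ (α * k) = 0 :=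
  moebius_eq_zero_of_not_squarefree fun hsq =>
    hα.one_lt.ne' (Nat.isUnit_iff.mp (hsq α (mul_dvd_mul_left α h)))

theorem moebius_prime_mul_of_not_dvd {α k : ℕ} (hα : α.Prime) (h : ¬α ∣ k) :
    μ (α * k) = -μ k := by
  rw [isMultiplicative_moebius.map_mul_of_coprime ((Nat.Prime.coprime_iff_not_dvd hα).mpr h),
    moebius_apply_prime hα, neg_one_mul]

theorem Nat.divisors_filter_not_dvd {α s : ℕ} (hα : α.Prime) (hs : s ≠ 0) :
    {k ∈ s.divisors | ¬α ∣ k} = (ordCompl[α] s).divisors := by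
  ext k
  simp only [mem_filter, Nat.mem_divisors]
  constructor
  · rintro ⟨⟨hk, -⟩, hαk⟩
    exact ⟨Nat.dvd_ordCompl_of_dvd_not_dvd hk hαk, (Nat.ordCompl_pos α hs).ne'⟩
  · rintro ⟨hk, -⟩
    exact ⟨⟨hk.trans (Nat.ordCompl_dvd s α), hs⟩, fun h => Nat.not_dvd_ordCompl hα hs (h.trans hk)⟩

theorem Nat.ordCompl_eq_one_iff {α s : ℕ} (hα : α.Prime) :
    ordCompl[α] s = 1 ↔ ∃ a, s = α ^ a := by
  constructor
  · intro h
    exact ⟨_, by rw [← Nat.ordProj_mul_ordCompl_eq_self s α, h, mul_one]⟩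
  · rintro ⟨a, rfl⟩
    exact Nat.ordCompl_self_pow hα

open Classical in
theorem sum_divisors_moebius_prime_mul {α s : ℕ} (hα : α.Prime) (hs : s ≠ 0) :
    ∑ k ∈ s.divisors, μ (α * k) = if ∃ a, s = α ^ a then -1 else 0 := by
  calc ∑ k ∈ s.divisors, μ (α * k) = ∑ k ∈ s.divisors with ¬α ∣ k, -μ k := by
        rw [sum_filter]
        refine sum_congr rfl fun k _ => ?_
        split_ifs with h
        · exact moebius_prime_mul_of_dvd hα h
        · exact moebius_prime_mul_of_not_dvd hα h
    _ = -∑ k ∈ (ordCompl[α] s).divisors, μ k := by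
        rw [Nat.divisors_filter_not_dvd hα hs, sum_neg_distrib]
    _ = if ∃ a, s = α ^ a then -1 else 0 := by
        rw [← coe_mul_zeta_apply, moebius_mul_coe_zeta, one_apply]
        simp [Nat.ordCompl_eq_one_iff hα, apply_ite]

theorem sum_Icc_div_mul_eq_sum_filter_dvd {M : Type*} [AddCommMonoid M] {N k : ℕ} (hk : 0 < k)
    (g : ℕ → M) : ∑ m ∈ Icc 1 (N / k), g (m * k) = ∑ s ∈ Icc 1 N with k ∣ s, g s := by
  refine sum_nbij' (· * k) (· / k) (fun m hm => ?_) (fun s hs => ?_) (fun m _ => ?_)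
    (fun s hs => ?_) fun _ _ => rfl
  · simp only [mem_filter, mem_Icc] at hm ⊢
    exact ⟨⟨Nat.mul_pos hm.1 hk, (Nat.le_div_iff_mul_le hk).mp hm.2⟩, dvd_mul_left k m⟩
  · simp only [mem_filter, mem_Icc] at hs ⊢
    exact ⟨(Nat.one_le_div_iff hk).mpr (Nat.le_of_dvd (by lia) hs.2),
      Nat.div_le_div_right hs.1.2⟩
  · exact Nat.mul_div_cancel m hk
  · exact Nat.div_mul_cancel (mem_filter.mp hs).2

theorem sum_Icc_sum_Icc_div_mul {M : Type*} [AddCommMonoid M] (N : ℕ) (f : ℕ → ℕ → M) :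
    ∑ k ∈ Icc 1 N, ∑ m ∈ Icc 1 (N / k), f (m * k) k =
      ∑ s ∈ Icc 1 N, ∑ k ∈ s.divisors, f s k := by
  rw [sum_congr rfl fun k hk => sum_Icc_div_mul_eq_sum_filter_dvd (mem_Icc.mp hk).1 (f · k)]
  refine sum_comm' fun k s => ?_
  simp only [mem_Icc, mem_filter, Nat.mem_divisors]
  constructor
  · rintro ⟨-, hs, hks⟩
    exact ⟨⟨hks, by lia⟩, hs⟩
  · rintro ⟨⟨hks, -⟩, hs⟩
    exact ⟨⟨Nat.pos_of_dvd_of_pos hks (by lia), (Nat.le_of_dvd (by lia) hks).trans hs.2⟩, hs, hks⟩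

open Classical in
theorem sum_Icc_two_sum_mul_moebius_prime_mul {α N : ℕ} (hα : α.Prime) (hN : 1 ≤ N)
    (f : ℕ → ℤ) :
    ∑ k ∈ Icc 2 N, (∑ m ∈ Icc 1 (N / k), f (m * k)) * μ (α * k) =
      ∑ s ∈ Icc 1 N, f s - ∑ s ∈ Icc 1 N with ∃ a, s = α ^ a, f s := by
  have hfull : ∑ k ∈ Icc 1 N, (∑ m ∈ Icc 1 (N / k), f (m * k)) * μ (α * k) =
      -∑ s ∈ Icc 1 N with ∃ a, s = α ^ a, f s := by
    simp_rw [sum_mul]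
    rw [sum_Icc_sum_Icc_div_mul N (fun s k => f s * μ (α * k)), sum_filter, ← sum_neg_distrib]
    refine sum_congr rfl fun s hs => ?_
    rw [← mul_sum, sum_divisors_moebius_prime_mul hα (by have := (mem_Icc.mp hs).1; lia)]
    split_ifs <;> simp
  have hsplit := add_sum_Ioc_eq_sum_Icc
    (f := fun k => (∑ m ∈ Icc 1 (N / k), f (m * k)) * μ (α * k)) hN
  rw [← Icc_add_one_left_eq_Ioc, hfull] at hsplit
  simp only [Nat.div_one, mul_one, moebius_apply_prime hα] at hsplit
  linear_combination hsplit

open Classical in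
theorem sum_filter_exists_pow_eq_sum_range {M : Type*} [AddCommMonoid M] {b N : ℕ} (hb : 2 ≤ b)
    (f : ℕ → M) (hf : ∀ s, N < s → f s = 0) :
    ∑ s ∈ Icc 1 N with ∃ a, s = b ^ a, f s = ∑ j ∈ range N, f (b ^ j) := by
  rw [← sum_image fun i _ j _ h => Nat.pow_right_injective hb h]
  refine sum_subset (fun s hs => ?_) (fun s hs hns => ?_)
  · obtain ⟨hs, a, rfl⟩ := mem_filter.mp hs
    exact mem_image.mpr ⟨a, mem_range.mpr ((Nat.lt_pow_self hb).trans_le (mem_Icc.mp hs).2), rfl⟩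
  · obtain ⟨j, -, rfl⟩ := mem_image.mp hs
    refine hf _ (not_le.mp fun hle => hns (mem_filter.mpr ⟨mem_Icc.mpr ⟨?_, hle⟩, j, rfl⟩))
    exact Nat.one_le_pow _ _ (by lia)

theorem sum_S2_moebius_prime_mul (α : ℕ) (hα : α.Prime) (n : ℕ) :
    ∑ k ∈ Finset.Icc 2 (n + 2),
        (S 2 (n + 2) k : ℤ) * ArithmeticFunction.moebius (α * k) =
      ∑ j ∈ Finset.range (n + 2),
        (pz ((n : ℤ) + 1 - (α : ℤ) ^ j) - pz ((n : ℤ) + 2 - (α : ℤ) ^ (j + 1))) := by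
  set N := n + 2 with hN
  have hS (k : ℕ) (hk : k ∈ Icc 2 N) :
      (S 2 N k : ℤ) = ∑ m ∈ Icc 1 (N / k), pzDiff ((N : ℤ) - (m * k : ℕ)) := by
    have hk2 := (mem_Icc.mp hk).1
    rw [S_eq_sum_pAtLeast (by lia) hk2]
    push_cast
    refine sum_congr rfl fun m hm => ?_
    have hmk := (Nat.le_div_iff_mul_le (by lia)).mp (mem_Icc.mp hm).2
    rw [pAtLeast_two_eq_pzDiff, Nat.cast_sub hmk, Nat.cast_mul]
  have hRHS (j : ℕ) : pz ((n : ℤ) + 1 - (α : ℤ) ^ j) - pz ((n : ℤ) + 2 - (α : ℤ) ^ (j + 1)) =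
      (pz ((N : ℤ) - (α : ℤ) ^ j) - pz ((N : ℤ) - (α : ℤ) ^ (j + 1))) -
        pzDiff ((N : ℤ) - (α ^ j : ℕ)) := by
    rw [pzDiff, hN]; push_cast; ring_nf
  have hN_lt : (N : ℤ) < (α : ℤ) ^ N := by exact_mod_cast Nat.lt_pow_self hα.one_lt
  calc ∑ k ∈ Icc 2 N, (S 2 N k : ℤ) * μ (α * k)
      = ∑ k ∈ Icc 2 N, (∑ m ∈ Icc 1 (N / k), pzDiff ((N : ℤ) - (m * k : ℕ))) * μ (α * k) :=
        sum_congr rfl fun k hk => by rw [hS k hk]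
    _ = pz (N - 1) - ∑ j ∈ range N, pzDiff ((N : ℤ) - (α ^ j : ℕ)) := by
        rw [sum_Icc_two_sum_mul_moebius_prime_mul hα (by lia) fun s => pzDiff ((N : ℤ) - s),
          sum_Icc_pzDiff_sub,
          sum_filter_exists_pow_eq_sum_range hα.two_le _ fun s hs => pzDiff_of_neg (by lia)]
    _ = ∑ j ∈ range N, (pz ((n : ℤ) + 1 - (α : ℤ) ^ j) - pz ((n : ℤ) + 2 - (α : ℤ) ^ (j + 1))) := by
        rw [sum_congr rfl fun j _ => hRHS j, sum_sub_distrib,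
          sum_range_sub' (fun j => pz ((N : ℤ) - (α : ℤ) ^ j)), pow_zero,
          pz_of_neg (m := (N : ℤ) - (α : ℤ) ^ N) (by lia), sub_zero]
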